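/- An l-valued language A : Σ* → l is l-regular if and only if there exist m ≥ 0, elements k₁,…,kₘ ∈ l∖{0}, and pairwise disjoint (classical) regular languages L₁,…,Lₘ ⊆ Σ* such that A = ⋁_{i=1}^m kᵢ·1_{Lᵢ}, where (k·1_L)(ω) = k if ω ∈ L and 0 otherwise. -/

import Mathlib

/-- A complete orthomodular lattice. -/
class OrthomodularCompleteLattice (α : Type*) extends CompleteLattice α, Compl α where
  inf_compl_self : ∀ a : α, a ⊓ aᶜ = ⊥
  sup_compl_self : ∀ a : α, a ⊔ aᶜ = ⊤
  compl_compl' : ∀ a : α, aᶜᶜ = a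
  compl_antitone : ∀ a b : α, a ≤ b → bᶜ ≤ aᶜ
  orthomodular : ∀ a b : α, a ≤ b → b = a ⊔ (aᶜ ⊓ b)

/-- An `l`-valued finite automaton (`l`-VFA). -/
structure LVFA (Q A l : Type*) where
  δ : Q → A → Q → l
  init : Q → l
  final : Q → l

/-- The `l`-valued language recognized by an `l`-VFA. -/
def lvfaLang {Q A l : Type*} [OrthomodularCompleteLattice l] (M : LVFA Q A l)
    (w : List A) : l :=
  ⨆ path : Fin (w.length + 1) → Q,
    M.init (path 0) ⊓
      (⨅ i : Fin w.length, M.δ (path i.castSucc) (w.get i) (path i.succ)) ⊓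
      M.final (path (Fin.last w.length))

/-- An `l`-valued deterministic finite automaton (`l`-VDFA). -/
structure LVDFA (Q A l : Type*) where
  next : Q → A → Q
  start : Q
  final : Q → l

/-- The `l`-valued language recognized by an `l`-VDFA. -/
def lvdfaLang {Q A l : Type*} (M : LVDFA Q A l) (w : List A) : l :=
  M.final (w.foldl M.next M.start)

/-- An `l`-valued finite automaton with ε-moves (`ε` is encoded as `none`). -/
structure LVFAe (Q A l : Type*) where
  δ : Q → Option A → Q → l
  init : Q → l
  final : Q → l

/-- The `l`-valued language recognized by an `l`-VFA with ε-moves. -/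
def lvfaeLang {Q A l : Type*} [OrthomodularCompleteLattice l] (M : LVFAe Q A l)
    (w : List A) : l :=
  ⨆ n : ℕ, ⨆ τ : Fin n → Option A, ⨆ _ : (List.ofFn τ).reduceOption = w,
    ⨆ path : Fin (n + 1) → Q,
      M.init (path 0) ⊓
        (⨅ i : Fin n, M.δ (path i.castSucc) (τ i) (path i.succ)) ⊓
        M.final (path (Fin.last n))

/-- An `l`-valued language is `l`-regular if it is recognized by some `l`-VFA. -/
def IsLRegular {A l : Type*} [OrthomodularCompleteLattice l] (f : List A → l) : Prop :=
  ∃ (Q : Type) (_ : Fintype Q) (M : LVFA Q A l), ∀ w, lvfaLang M w = f w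

/-!
Meets need not distribute over joins in `l`, so the subset construction has to remember, for
every state `q`, the *set* of weights of the runs ending in `q` rather than their join. Each such
weight is the meet of a subset of the finitely many values of `init` and `δ`, hence only finitely
many tuples of weight sets are reachable, and the words reaching a given tuple form a regular
language; grouping them by the resulting value gives the pieces `Lᵢ`. Conversely, the product of
DFAs for the `Lᵢ`, with final weight the join of the `kᵢ` over the accepting components, is an
`l`-VDFA, and an `l`-VDFA is an `l`-VFA whose transitions and initial weights lie in `{⊥, ⊤}`.
-/

theorem iInf_fin_succ {l : Type*} [CompleteLattice l] {n : ℕ} (f : Fin (n + 1) → l) :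
    ⨅ i, f i = f 0 ⊓ ⨅ i : Fin n, f i.succ := by
  refine le_antisymm (le_inf (iInf_le _ _) (le_iInf fun i => iInf_le _ _)) (le_iInf fun i => ?_)
  induction i using Fin.cases with
  | zero => exact inf_le_left
  | succ i => exact inf_le_right.trans (iInf_le _ i)

theorem Language.isRegular_setOf_foldl_mem {A σ : Type*} (step : σ → A → σ) (s : σ)
    (hfin : (Set.range (List.foldl step s)).Finite) (P : Set σ) :
    Language.IsRegular ({w | w.foldl step s ∈ P} : Language A) := by
  refine .of_finite_range_leftQuotient <| (hfin.image fun t => {v | v.foldl step t ∈ P}).subset ?_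
  rintro _ ⟨u, rfl⟩
  refine ⟨_, ⟨u, rfl⟩, ?_⟩
  ext v
  change _ ↔ (u ++ v).foldl step s ∈ P
  rw [List.foldl_append]
  exact Iff.rfl

section DisjointStep

variable {A l : Type*} [CompleteLattice l]

def IsDisjointStep (f : List A → l) : Prop :=
  ∃ (m : ℕ) (k : Fin m → l) (L : Fin m → Language A),
    (∀ i, k i ≠ ⊥) ∧ (∀ i, (L i).IsRegular) ∧
    (∀ i j, i ≠ j → ∀ w : List A, w ∈ L i → w ∉ L j) ∧
    ∀ w : List A, f w = ⨆ i, ⨆ _ : w ∈ L i, k i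

theorem isDisjointStep_comp_foldl {σ : Type*} (step : σ → A → σ) (s : σ)
    (hfin : (Set.range (List.foldl step s)).Finite) (F : σ → l) :
    IsDisjointStep fun w => F (w.foldl step s) := by
  set run := List.foldl step s
  let ι := {p : Set.range run // F p ≠ ⊥}
  have : Finite ι := by have := hfin.to_subtype; infer_instance
  let e := (Finite.equivFin ι).symm
  refine ⟨Nat.card ι, fun i => F (e i).1, fun i => {w | run w = (e i).1.1},
    fun i => (e i).2, fun i => Language.isRegular_setOf_foldl_mem step s hfin {(e i).1.1}, ?_, ?_⟩
  · intro i j hij w hi hj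
    exact hij (e.injective (Subtype.ext (Subtype.ext (hi.symm.trans hj))))
  · intro w
    have hterm : ∀ i, ⨆ _ : run w = (e i).1.1, F (e i).1 =
        ⨆ _ : run w = (e i).1.1, F (run w) :=
      fun i => iSup_congr_Prop Iff.rfl fun h => by rw [h]
    change _ = ⨆ i, ⨆ _ : run w = (e i).1.1, F (e i).1
    simp only [hterm]
    by_cases hw : F (run w) = ⊥
    · simp [hw]
    · exact le_antisymm (le_iSup₂_of_le (e.symm ⟨⟨run w, w, rfl⟩, hw⟩) (by simp) le_rfl)
        (iSup₂_le fun _ _ => le_rfl)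

end DisjointStep

namespace LVFA

section Weights

variable {Q A l : Type*} [CompleteLattice l] (M : LVFA Q A l)

def stepWeights (S : Q → Set l) (a : A) (q' : Q) : Set l :=
  {x | ∃ q, ∃ y ∈ S q, x = y ⊓ M.δ q a q'}

def runWeights (w : List A) : Q → Set l :=
  w.foldl M.stepWeights fun q => {M.init q}

theorem mem_foldl_stepWeights_iff {w : List A} {S : Q → Set l} {q : Q} {x : l} :
    x ∈ w.foldl M.stepWeights S q ↔
      ∃ path : Fin (w.length + 1) → Q, path (Fin.last _) = q ∧ ∃ y ∈ S (path 0),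
        x = y ⊓ ⨅ i : Fin w.length, M.δ (path i.castSucc) (w.get i) (path i.succ) := by
  induction w generalizing S with
  | nil =>
    constructor
    · exact fun hx => ⟨fun _ => q, rfl, x, hx, by simp⟩
    · rintro ⟨path, rfl, y, hy, rfl⟩
      simpa using hy
  | cons a w ih =>
    rw [List.foldl_cons, ih]
    conv_rhs => rw [Fin.exists_fin_succ_pi]
    simp only [List.length_cons, iInf_fin_succ, ← Fin.succ_last, Fin.cons_zero, Fin.cons_succ,
      Fin.castSucc_zero, ← Fin.succ_castSucc]
    constructor
    · rintro ⟨p, hp, _, ⟨q0, y, hy, rfl⟩, rfl⟩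
      exact ⟨q0, p, hp, y, hy, inf_assoc ..⟩
    · rintro ⟨q0, p, hp, y, hy, rfl⟩
      exact ⟨p, hp, _, ⟨q0, y, hy, rfl⟩, (inf_assoc ..).symm⟩

theorem mem_runWeights_iff {w : List A} {q : Q} {x : l} :
    x ∈ M.runWeights w q ↔
      ∃ path : Fin (w.length + 1) → Q, path (Fin.last _) = q ∧
        x = M.init (path 0) ⊓
          ⨅ i : Fin w.length, M.δ (path i.castSucc) (w.get i) (path i.succ) := by
  simp [runWeights, mem_foldl_stepWeights_iff]

theorem finite_range_runWeights [Finite Q] [Finite A] : (Set.range M.runWeights).Finite := by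
  set gens := Set.range M.init ∪ Set.range fun t : Q × A × Q => M.δ t.1 t.2.1 t.2.2
  have hgens : gens.Finite := (Set.finite_range _).union (Set.finite_range _)
  have hmeets : ∀ w q, M.runWeights w q ⊆ sInf '' {s | s ⊆ gens} := by
    intro w q x hx
    obtain ⟨path, -, rfl⟩ := (M.mem_runWeights_iff).1 hx
    refine ⟨insert (M.init (path 0)) (Set.range fun i => _), ?_,
      by rw [sInf_insert, sInf_range]⟩
    exact Set.insert_subset (.inl ⟨_, rfl⟩)
      (Set.range_subset_iff.2 fun i => .inr ⟨(_, _, _), rfl⟩)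
  refine (Set.Finite.pi fun _ => (hgens.finite_subsets.image sInf).finite_subsets).subset ?_
  rintro _ ⟨w, rfl⟩ q -
  exact hmeets w q

end Weights

theorem lvfaLang_eq_iSup_runWeights {Q A l : Type*} [OrthomodularCompleteLattice l]
    (M : LVFA Q A l) (w : List A) :
    lvfaLang M w = ⨆ q, ⨆ x ∈ M.runWeights w q, x ⊓ M.final q := by
  refine le_antisymm (iSup_le fun path => ?_) (iSup_le fun q => iSup₂_le fun x hx => ?_)
  · exact le_iSup_of_le (path (Fin.last _))
      (le_iSup₂_of_le _ ((M.mem_runWeights_iff).2 ⟨path, rfl, rfl⟩) le_rfl)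
  · obtain ⟨path, rfl, rfl⟩ := (M.mem_runWeights_iff).1 hx
    exact le_iSup_of_le path le_rfl

end LVFA

theorem IsLRegular.isDisjointStep {A l : Type*} [OrthomodularCompleteLattice l] [Finite A]
    {f : List A → l} (hf : IsLRegular f) : IsDisjointStep f := by
  obtain ⟨Q, _, M, hM⟩ := hf
  obtain rfl : (fun w => lvfaLang M w) = f := funext hM
  simp only [LVFA.lvfaLang_eq_iSup_runWeights]
  exact isDisjointStep_comp_foldl M.stepWeights (fun q => {M.init q}) M.finite_range_runWeights
    fun S => ⨆ q, ⨆ x ∈ S q, x ⊓ M.final q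

namespace LVDFA

section ToLVFA

variable {Q A l : Type*} [CompleteLattice l]

def toLVFA [DecidableEq Q] (N : LVDFA Q A l) : LVFA Q A l where
  δ q a q' := if q' = N.next q a then ⊤ else ⊥
  init q := if q = N.start then ⊤ else ⊥
  final := N.final

/-- The weight sets of a single run of weight `⊤` standing in state `s`. -/
def ConcentratedAt (S : Q → Set l) (s : Q) : Prop :=
  (∀ q ≠ s, ∀ x ∈ S q, x = ⊥) ∧ ⊤ ∈ S s

theorem ConcentratedAt.stepWeights_toLVFA [DecidableEq Q] (N : LVDFA Q A l) {S : Q → Set l}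
    {s : Q} (h : ConcentratedAt S s) (a : A) :
    ConcentratedAt (N.toLVFA.stepWeights S a) (N.next s a) := by
  refine ⟨?_, s, ⊤, h.2, by simp [toLVFA]⟩
  rintro q' hq' _ ⟨q, y, hy, rfl⟩
  by_cases hq : q = s
  · subst hq
    simp [toLVFA, hq']
  · simp [h.1 q hq y hy]

theorem ConcentratedAt.foldl_stepWeights_toLVFA [DecidableEq Q] (N : LVDFA Q A l)
    {S : Q → Set l} {s : Q} (h : ConcentratedAt S s) (w : List A) :
    ConcentratedAt (w.foldl N.toLVFA.stepWeights S) (w.foldl N.next s) := by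
  induction w generalizing S s with
  | nil => exact h
  | cons a w ih => exact ih (h.stepWeights_toLVFA N a)

theorem ConcentratedAt.iSup_inf_eq {S : Q → Set l} {s : Q} (h : ConcentratedAt S s)
    (g : Q → l) : ⨆ q, ⨆ x ∈ S q, x ⊓ g q = g s := by
  refine le_antisymm (iSup_le fun q => iSup₂_le fun x hx => ?_)
    (le_iSup_of_le s (le_iSup₂_of_le ⊤ h.2 (top_inf_eq _).ge))
  by_cases hq : q = s
  · subst hq
    exact inf_le_right
  · simp [h.1 q hq x hx]

end ToLVFA

theorem lvfaLang_toLVFA {Q A l : Type*} [OrthomodularCompleteLattice l] [DecidableEq Q]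
    (N : LVDFA Q A l) (w : List A) : lvfaLang N.toLVFA w = lvdfaLang N w := by
  have hinit : ConcentratedAt (fun q => {N.toLVFA.init q}) N.start :=
    ⟨fun q hq x hx => by simp_all [toLVFA], by simp [toLVFA]⟩
  rw [LVFA.lvfaLang_eq_iSup_runWeights]
  exact (hinit.foldl_stepWeights_toLVFA N w).iSup_inf_eq N.final

theorem isLRegular_lvdfaLang {Q : Type} [Finite Q] {A l : Type*} [OrthomodularCompleteLattice l]
    (N : LVDFA Q A l) : IsLRegular (lvdfaLang N) := by
  classical
  exact ⟨Q, Fintype.ofFinite Q, N.toLVFA, N.lvfaLang_toLVFA⟩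

end LVDFA

theorem isLRegular_iSup_mem {ι : Type} [Finite ι] {A l : Type*} [OrthomodularCompleteLattice l]
    (k : ι → l) (L : ι → Language A) (hL : ∀ i, (L i).IsRegular) :
    IsLRegular fun w => ⨆ i, ⨆ _ : w ∈ L i, k i := by
  choose σ _ M hM using hL
  let N : LVDFA (∀ i, σ i) A l :=
    { next := fun q a i => (M i).step (q i) a
      start := fun i => (M i).start
      final := fun q => ⨆ i, ⨆ _ : q i ∈ (M i).accept, k i }
  have hrun : ∀ w q i, w.foldl N.next q i = (M i).evalFrom (q i) w := by
    intro w
    induction w with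
    | nil => exact fun _ _ => rfl
    | cons a w ih => exact fun q => ih (N.next q a)
  have hN : lvdfaLang N = fun w => ⨆ i, ⨆ _ : w ∈ L i, k i := by
    funext w
    change ⨆ i, ⨆ _ : w.foldl N.next N.start i ∈ (M i).accept, k i = _
    simp only [hrun, ← hM, DFA.mem_accepts]
    rfl
  exact hN ▸ N.isLRegular_lvdfaLang

/-- An `l`-valued language is `l`-regular iff it is a finite join of scalar multiples of
characteristic functions of pairwise disjoint classical regular languages. -/
theorem lregular_iff_disjoint_step {l A : Type*} [OrthomodularCompleteLattice l] [Fintype A]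
    (f : List A → l) :
    IsLRegular f ↔
      ∃ (m : ℕ) (k : Fin m → l) (L : Fin m → Language A),
        (∀ i, k i ≠ ⊥) ∧ (∀ i, (L i).IsRegular) ∧
        (∀ i j, i ≠ j → ∀ w : List A, w ∈ L i → w ∉ L j) ∧
        ∀ w : List A, f w = ⨆ i, ⨆ _ : w ∈ L i, k i :=
  ⟨IsLRegular.isDisjointStep,
    fun ⟨_, k, L, _, hL, _, hf⟩ => funext hf ▸ isLRegular_iSup_mem k L hL⟩
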